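/- On V = ℝ^m (m = 2m̄ ≥ 4) with the neutral signature bilinear form ⟨e_i,e_j⟩ = 0 for i ≠ j, ⟨e_i,e_i⟩ = 1 for i even, ⟨e_i,e_i⟩ = −1 for i odd, and the standard para-complex structure J̃ (J̃e_{2k+1} = e_{2k+2}, J̃e_{2k+2} = e_{2k+1} for 0 ≤ k < m̄), define Θ(x,y,z,w) := ½(x₁y₁ − x₂y₂)(z₁w₁ − z₂w₂), where x_i denotes the i-th coordinate of x. Then: (i) Θ is symmetric in its first two and in its last two arguments and satisfies Θ(J̃x,J̃y,z,w) = −Θ(x,y,z,w), i.e. Θ ∈ S²₋(V*)⊗S²(V*); (ii) K_{J̃}Θ = 0; (iii) LΘ ≠ 0. -/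

import Mathlib

/-! Θ only sees the first hyperbolic plane `span(e₁, e₂)`, on which `J̃` swaps the two coordinates.
Writing `Θ = ½ q ⊗ q` with `q(x, y) = x₁y₁ − x₂y₂`, one has `q(J̃x, J̃y) = −q(x, y)` and
`q(x, J̃y) = det(x, y)`, so `K_{J̃}Θ(x,y,z;w) = ½ q(det(x,y) z + det(y,z) x + det(z,x) y, w)`,
which vanishes because three vectors of a plane satisfy that Cramer relation.
Finally `LΘ(e₁, e₂, e₁, e₂) = −1`. -/

namespace GeometricRealizationsStmt18

/-- The neutral signature bilinear form on `ℝ^{2n}` (0-indexed: `⟨e_i,e_i⟩ = 1` for `i`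
odd in the 0-indexed convention, i.e. even in the 1-indexed convention of the paper,
and `−1` otherwise). -/
def nip {m : ℕ} (x y : Fin m → ℝ) : ℝ :=
  ∑ i : Fin m, (if (i : ℕ) % 2 = 1 then (1 : ℝ) else -1) * x i * y i

/-- The standard para-complex structure on `ℝ^{2n}` (0-indexed): `J̃ e_{2k} = e_{2k+1}`,
`J̃ e_{2k+1} = e_{2k}`. -/
def stdParaJ (n : ℕ) (x : Fin (2 * n) → ℝ) : Fin (2 * n) → ℝ := fun i =>
  if h : (i : ℕ) % 2 = 1 then x ⟨(i : ℕ) - 1, by have := i.isLt; omega⟩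
  else x ⟨(i : ℕ) + 1, by have := i.isLt; omega⟩

theorem stdParaJ_apply_of_even {n : ℕ} (x : Fin (2 * n) → ℝ) (i : Fin (2 * n))
    (hi : (i : ℕ) % 2 = 0) :
    stdParaJ n x i = x ⟨i + 1, by have := i.isLt; omega⟩ := by
  simp [stdParaJ, hi]

theorem stdParaJ_apply_of_odd {n : ℕ} (x : Fin (2 * n) → ℝ) (i : Fin (2 * n))
    (hi : (i : ℕ) % 2 = 1) :
    stdParaJ n x i = x ⟨i - 1, by have := i.isLt; omega⟩ := by
  simp [stdParaJ, hi]

/-- On `V = ℝ^m` (`m = 2n ≥ 4`) with the neutral signature form and the standard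
para-complex structure `J̃`, the tensor `Θ(x,y,z,w) = ½(x₁y₁ − x₂y₂)(z₁w₁ − z₂w₂)`
lies in `S²₋(V*)⊗S²(V*)`, lies in the kernel of `K_{J̃}`, and `LΘ ≠ 0`. -/
theorem theta_realizes_nonzero_paraKaehler_tensor
    (n : ℕ) (hn : 2 ≤ n)
    (J : (Fin (2 * n) → ℝ) → (Fin (2 * n) → ℝ)) (hJ : J = stdParaJ n)
    (Θ : (Fin (2 * n) → ℝ) → (Fin (2 * n) → ℝ) → (Fin (2 * n) → ℝ) → (Fin (2 * n) → ℝ) → ℝ)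
    (hΘ : ∀ x y z w, Θ x y z w =
      (1 / 2) * (x ⟨0, by omega⟩ * y ⟨0, by omega⟩ - x ⟨1, by omega⟩ * y ⟨1, by omega⟩)
        * (z ⟨0, by omega⟩ * w ⟨0, by omega⟩ - z ⟨1, by omega⟩ * w ⟨1, by omega⟩))
    (LΘ : (Fin (2 * n) → ℝ) → (Fin (2 * n) → ℝ) → (Fin (2 * n) → ℝ) → (Fin (2 * n) → ℝ) → ℝ)
    (hLΘ : ∀ x y z w, LΘ x y z w = Θ x z y w + Θ y w x z - Θ x w y z - Θ y z x w) :
    -- (i) `Θ ∈ S²₋(V*)⊗S²(V*)`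
    ((∀ x y z w, Θ x y z w = Θ y x z w) ∧
     (∀ x y z w, Θ x y z w = Θ x y w z) ∧
     (∀ x y z w, Θ (J x) (J y) z w = - Θ x y z w)) ∧
    -- (ii) `K_{J̃}Θ = 0`
    (∀ x y z w, Θ x (J y) z w + Θ y (J z) x w + Θ z (J x) y w = 0) ∧
    -- (iii) `LΘ ≠ 0`
    (LΘ ≠ fun _ _ _ _ => (0 : ℝ)) := by
  subst hJ
  set i₀ : Fin (2 * n) := ⟨0, by omega⟩
  set i₁ : Fin (2 * n) := ⟨1, by omega⟩
  have J₀ (x : Fin (2 * n) → ℝ) : stdParaJ n x i₀ = x i₁ := stdParaJ_apply_of_even x i₀ rfl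
  have J₁ (x : Fin (2 * n) → ℝ) : stdParaJ n x i₁ = x i₀ := stdParaJ_apply_of_odd x i₁ rfl
  refine ⟨⟨?_, ?_, ?_⟩, ?_, ?_⟩
  · intro x y z w; simp only [hΘ]; ring
  · intro x y z w; simp only [hΘ]; ring
  · intro x y z w; simp only [hΘ, J₀, J₁]; ring
  · intro x y z w; simp only [hΘ, J₀, J₁]; ring
  · intro hL
    have h01 : i₀ ≠ i₁ := by simp [i₀, i₁]
    have hL_e := congrArg (fun L => L (Pi.single i₀ 1) (Pi.single i₁ 1) (Pi.single i₀ 1)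
      (Pi.single i₁ 1)) hL
    simp [hLΘ, hΘ, h01, h01.symm] at hL_e

end GeometricRealizationsStmt18
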